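/- Define g(a,b) = (b+1)(b+2)(b+3)(b+4)(b+5)(7a² - 7ab + 2b² + 21a - 9b + 14)/(14·5!). If a ≥ b ≥ 0 are integers, then the coefficient c(a,b) of q₁^a q₂^b in 1/((1-q₁)³(1-q₂)³(1-q₁q₂)³) equals g(a,b). -/

import Mathlib

/-- `c a b` is the number of 9-tuples of nonnegative integers
`(i₁,i₂,i₃,j₁,j₂,j₃,k₁,k₂,k₃)` with `∑ i + ∑ k = a` and `∑ j + ∑ k = b`, i.e. the
coefficient of `q₁^a q₂^b` in `1/((1-q₁)³(1-q₂)³(1-q₁q₂)³)`. -/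
noncomputable def c (a b : ℕ) : ℕ :=
  Nat.card {t : (Fin 3 → ℕ) × (Fin 3 → ℕ) × (Fin 3 → ℕ) //
    (∑ s, t.1 s) + (∑ s, t.2.2 s) = a ∧ (∑ s, t.2.1 s) + (∑ s, t.2.2 s) = b}

/-- The polynomial `g`. -/
def g (a b : ℚ) : ℚ :=
  (b + 1) * (b + 2) * (b + 3) * (b + 4) * (b + 5) *
    (7 * a ^ 2 - 7 * a * b + 2 * b ^ 2 + 21 * a - 9 * b + 14) /
      (14 * Nat.factorial 5)

/-! Splitting a 9-tuple according to the common sum `m = ∑ k`, and counting triples of naturals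
with a given sum `n` by stars and bars (`T n = (n + 1)(n + 2)/2` of them), gives
`c a b = ∑_{m ≤ b} T(a - m) T(b - m) T(m)`. The summand is a polynomial of degree 6 in `m`, so
the sum telescopes against a polynomial of degree 7 in the upper limit, whose value at `b + 1`
is `g a b`. -/

open Finset

section Counting

variable {ι κ μ : Type*} [Fintype ι] [Fintype κ] [Fintype μ]

instance (n : ℕ) : Finite {x : ι → ℕ // ∑ i, x i = n} := by
  classical exact Finite.of_equiv _ (Sym.equivNatSumOfFintype ι n)

theorem natCard_subtype_sum_eq (n : ℕ) :
    Nat.card {x : ι → ℕ // ∑ i, x i = n} = (Fintype.card ι + n - 1).choose n := by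
  classical
  rw [← Nat.card_congr (Sym.equivNatSumOfFintype ι n), Sym.natCard_sym_eq_choose,
    Nat.card_eq_fintype_card]

theorem natCard_fin_three_sum_eq (n : ℕ) :
    (Nat.card {x : Fin 3 → ℕ // ∑ i, x i = n} : ℚ) = (n + 1) * (n + 2) / 2 := by
  rw [natCard_subtype_sum_eq, Fintype.card_fin, show 3 + n - 1 = n + 2 by omega,
    Nat.choose_symm_add, Nat.cast_choose_two]
  push_cast
  ring

def sumAddSumEquivSigma (a b : ℕ) (hba : b ≤ a) :
    {t : (ι → ℕ) × (κ → ℕ) × (μ → ℕ) //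
      ∑ s, t.1 s + ∑ s, t.2.2 s = a ∧ ∑ s, t.2.1 s + ∑ s, t.2.2 s = b} ≃
    Σ m : Fin (b + 1), {x : ι → ℕ // ∑ s, x s = a - m} × {y : κ → ℕ // ∑ s, y s = b - m} ×
      {z : μ → ℕ // ∑ s, z s = m} where
  toFun t := ⟨⟨∑ s, t.1.2.2 s, by have := t.2; omega⟩, ⟨t.1.1, by dsimp only; omega⟩,
    ⟨t.1.2.1, by dsimp only; omega⟩, ⟨t.1.2.2, rfl⟩⟩
  invFun p := ⟨(p.2.1, p.2.2.1, p.2.2.2), by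
    obtain ⟨⟨m, hm⟩, ⟨x, hx⟩, ⟨y, hy⟩, ⟨z, hz⟩⟩ := p
    dsimp only at *
    omega⟩
  left_inv _ := rfl
  right_inv := by
    rintro ⟨⟨m, hm⟩, ⟨x, hx⟩, ⟨y, hy⟩, ⟨z, hz⟩⟩
    dsimp only at hz
    subst hz
    rfl

theorem natCard_subtype_sum_add_sum_eq (a b : ℕ) (hba : b ≤ a) :
    Nat.card {t : (ι → ℕ) × (κ → ℕ) × (μ → ℕ) //
      ∑ s, t.1 s + ∑ s, t.2.2 s = a ∧ ∑ s, t.2.1 s + ∑ s, t.2.2 s = b} =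
    ∑ m ∈ range (b + 1), Nat.card {x : ι → ℕ // ∑ s, x s = a - m} *
      Nat.card {y : κ → ℕ // ∑ s, y s = b - m} * Nat.card {z : μ → ℕ // ∑ s, z s = m} := by
  rw [Nat.card_congr (sumAddSumEquivSigma a b hba), Nat.card_sigma, sum_range]
  simp only [Nat.card_prod, mul_assoc]

end Counting

-- The right-hand side is the discrete antiderivative of the summand, found by interpolation.
theorem sum_range_triangular_product (A B : ℚ) (n : ℕ) :
    ∑ m ∈ range n, (A - m + 1) * (A - m + 2) / 2 * ((B - m + 1) * (B - m + 2) / 2) *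
        ((m + 1) * (m + 2) / 2) =
      n * (n + 1) * (n + 2) / 1680 *
        (70 * A ^ 2 * B ^ 2 + 315 * A * B * (A + B) + 329 * (A ^ 2 + B ^ 2) + 1386 * A * B
          + 1407 * (A + B) + 1378
        - n * (105 * A * B * (A + B) + 231 * (A ^ 2 + B ^ 2) + 924 * A * B + 1463 * (A + B)
          + 1962)
        + n ^ 2 * (42 * (A ^ 2 + B ^ 2) + 168 * A * B + 546 * (A + B) + 1134)
        - n ^ 3 * (70 * (A + B) + 300) + 30 * n ^ 4) := by
  induction n with
  | zero => simp
  | succ n ih =>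
    rw [sum_range_succ, ih]
    push_cast
    ring

theorem coeff_eq_g (a b : ℕ) (hba : b ≤ a) : (c a b : ℚ) = g a b := by
  have hcard (m : ℕ) (hm : m ∈ range (b + 1)) :
      ((Nat.card {x : Fin 3 → ℕ // ∑ s, x s = a - m} *
        Nat.card {y : Fin 3 → ℕ // ∑ s, y s = b - m} *
          Nat.card {z : Fin 3 → ℕ // ∑ s, z s = m} : ℕ) : ℚ) =
        (a - m + 1) * (a - m + 2) / 2 * ((b - m + 1) * (b - m + 2) / 2) *
          ((m + 1) * (m + 2) / 2) := by
    have hmb : m ≤ b := Nat.lt_succ_iff.mp (mem_range.mp hm)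
    push_cast [natCard_fin_three_sum_eq, Nat.cast_sub hmb, Nat.cast_sub (hmb.trans hba)]
    ring
  rw [c, natCard_subtype_sum_add_sum_eq a b hba, Nat.cast_sum, sum_congr rfl hcard,
    sum_range_triangular_product, g]
  push_cast
  ring
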